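/- arXiv:2501.06206 — 2 statements merged into one kernel-verified Lean document; each statement's English description precedes it below -/
import Mathlib

section
/- For all complex numbers b, c, z such that b, c, and b+c-1 are not nonpositive integers, the product of confluent-type series satisfies ₀F₁(;b;z) · ₀F₁(;c;z) = ₂F₃((b+c-1)/2, (b+c)/2; b, c, b+c-1; 4z), where ₀F₁(;b;z) = Σ_{n≥0} zⁿ/((b)ₙ n!) and ₂F₃(a₁,a₂;b₁,b₂,b₃;z) = Σ_{n≥0} (a₁)ₙ(a₂)ₙ zⁿ/((b₁)ₙ(b₂)ₙ(b₃)ₙ n!), with (x)ₙ the Pochhammer rising factorial. -/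
open Complex MeasureTheory Filter Topology

noncomputable def poch (x : ℂ) (n : ℕ) : ℂ := (ascPochhammer ℂ n).eval x

/-- Generalized hypergeometric series. -/
noncomputable def pFq (a b : List ℂ) (z : ℂ) : ℂ :=
  ∑' n : ℕ, ((a.map (fun ai => poch ai n)).prod / (b.map (fun bj => poch bj n)).prod)
    * z ^ n / (n.factorial : ℂ)

/-- Regularized generalized hypergeometric series. -/
noncomputable def pFqReg (a b : List ℂ) (z : ℂ) : ℂ :=
  ∑' n : ℕ, ((a.map (fun ai => poch ai n)).prod /
      (b.map (fun bj => Complex.Gamma (bj + n))).prod) * z ^ n / (n.factorial : ℂ)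

/-- Bessel function of the first kind. -/
noncomputable def besselJ (ν z : ℂ) : ℂ :=
  (z / 2) ^ ν / Complex.Gamma (ν + 1) * pFq [] [ν + 1] (-z ^ 2 / 4)

/-- Generalized Pochhammer symbol `(x)_a = Γ(x+a)/Γ(x)`. -/
noncomputable def pochC (x a : ℂ) : ℂ := Complex.Gamma (x + a) / Complex.Gamma x

/-- `z` is not a nonpositive integer. -/
def notNonposInt (z : ℂ) : Prop := ∀ m : ℕ, z ≠ -(m : ℂ)

lemma poch_zero (x : ℂ) : poch x 0 = 1 := by simp [poch]

lemma poch_succ (x : ℂ) (n : ℕ) : poch x (n + 1) = poch x n * (x + n) := by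
  simp [poch, ascPochhammer_succ_right]

lemma poch_add (x : ℂ) (n m : ℕ) : poch x (n + m) = poch x n * poch (x + n) m := by
  have h := ascPochhammer_mul ℂ n m
  have := congrArg (Polynomial.eval x) h
  simpa [poch, Polynomial.eval_comp] using this.symm

lemma poch_ne_zero {x : ℂ} (hx : notNonposInt x) (n : ℕ) : poch x n ≠ 0 := by
  induction n with
  | zero => simp [poch_zero]
  | succ n ih =>
    rw [poch_succ]
    refine mul_ne_zero ih ?_
    intro h
    exact hx n (by linear_combination h)

lemma notNonposInt_add {x : ℂ} (hx : notNonposInt x) (k : ℕ) : notNonposInt (x + k) := by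
  intro m h
  refine hx (m + k) ?_
  push_cast
  linear_combination h

lemma choose_split {n i j : ℕ} (h : i + j = n + 1) :
    (n + 1).choose i = n.choose i + n.choose j := by
  cases i with
  | zero =>
    have hj : j = n + 1 := by omega
    subst hj
    simp [Nat.choose_succ_self]
  | succ i =>
    have hin : i ≤ n := by omega
    have hj : j = n - i := by omega
    subst hj
    rw [Nat.choose_succ_succ, Nat.choose_symm hin, add_comm]

noncomputable def T (n : ℕ) (b c : ℂ) : ℂ :=
  ∑ p ∈ Finset.HasAntidiagonal.antidiagonal n,
    (n.choose p.1 : ℂ) * poch (b + p.1) p.2 * poch (c + p.2) p.1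

lemma T_eq (n : ℕ) : ∀ b c : ℂ, T n b c = poch (b + c + n - 1) n := by
  induction n with
  | zero => intro b c; simp [T, poch_zero]
  | succ n ih =>
    intro b c
    have hsplit : T (n + 1) b c
        = (∑ p ∈ Finset.HasAntidiagonal.antidiagonal (n + 1),
            (n.choose p.1 : ℂ) * poch (b + p.1) p.2 * poch (c + p.2) p.1)
        + ∑ p ∈ Finset.HasAntidiagonal.antidiagonal (n + 1),
            (n.choose p.2 : ℂ) * poch (b + p.1) p.2 * poch (c + p.2) p.1 := by
      rw [T, ← Finset.sum_add_distrib]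
      refine Finset.sum_congr rfl fun p hp => ?_
      rw [choose_split (Finset.HasAntidiagonal.mem_antidiagonal.mp hp)]
      push_cast; ring
    have h1 : (∑ p ∈ Finset.HasAntidiagonal.antidiagonal (n + 1),
          (n.choose p.1 : ℂ) * poch (b + p.1) p.2 * poch (c + p.2) p.1)
        = (b + n) * T n b (c + 1) := by
      rw [Finset.Nat.sum_antidiagonal_succ', T, Finset.mul_sum]
      simp only [Nat.choose_succ_self, Nat.cast_zero, zero_mul, zero_add]
      refine Finset.sum_congr rfl fun p hp => ?_
      have hp' := Finset.HasAntidiagonal.mem_antidiagonal.mp hp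
      have hn : (p.1 : ℂ) + (p.2 : ℂ) = (n : ℂ) := by rw [← Nat.cast_add, hp']
      rw [poch_succ, show c + ((p.2 + 1 : ℕ) : ℂ) = (c + 1) + p.2 by push_cast; ring]
      rw [show b + (p.1 : ℂ) + (p.2 : ℂ) = b + (n : ℂ) by rw [add_assoc, hn]]
      ring
    have h2 : (∑ p ∈ Finset.HasAntidiagonal.antidiagonal (n + 1),
          (n.choose p.2 : ℂ) * poch (b + p.1) p.2 * poch (c + p.2) p.1)
        = (c + n) * T n c (b + 1) := by
      rw [Finset.Nat.sum_antidiagonal_succ, T, Finset.mul_sum]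
      simp only [Nat.choose_succ_self, Nat.cast_zero, zero_mul, zero_add, mul_zero]
      rw [← Finset.Nat.sum_antidiagonal_swap
        (f := fun p => (c + (n : ℂ)) * ((n.choose p.1 : ℂ) * poch (c + p.1) p.2
          * poch ((b + 1) + p.2) p.1))]
      refine Finset.sum_congr rfl fun p hp => ?_
      have hp' := Finset.HasAntidiagonal.mem_antidiagonal.mp hp
      have hn : (p.1 : ℂ) + (p.2 : ℂ) = (n : ℂ) := by rw [← Nat.cast_add, hp']
      rw [poch_succ, show b + ((p.1 + 1 : ℕ) : ℂ) = (b + 1) + p.1 by push_cast; ring]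
      rw [show c + (p.2 : ℂ) + (p.1 : ℂ) = c + (n : ℂ) by rw [add_assoc, add_comm (p.2:ℂ), hn]]
      simp only [Prod.fst_swap, Prod.snd_swap, Prod.swap]
      ring
    rw [hsplit, h1, h2, ih, ih]
    rw [show b + (c + 1) + (n : ℂ) - 1 = b + c + n by ring,
      show c + (b + 1) + (n : ℂ) - 1 = b + c + n by ring,
      show b + c + ((n + 1 : ℕ) : ℂ) - 1 = b + c + n by push_cast; ring]
    rw [poch_succ]
    push_cast
    ring

lemma poch_half (x : ℂ) (n : ℕ) :
    (4 : ℂ) ^ n * poch (x / 2) n * poch ((x + 1) / 2) n = poch x (2 * n) := by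
  induction n with
  | zero => simp [poch_zero]
  | succ n ih =>
    rw [show 2 * (n + 1) = (2 * n) + 1 + 1 by ring, poch_succ, poch_succ, poch_succ, poch_succ,
      ← ih]
    push_cast
    ring

lemma hyp_summable (x z : ℂ) (hx : notNonposInt x) :
    Summable (fun n : ℕ => ‖z ^ n / (poch x n * (n.factorial : ℂ))‖) := by
  apply summable_of_ratio_norm_eventually_le (r := 1/2) (by norm_num)
  have hev : ∀ᶠ n : ℕ in atTop, 2 * ‖z‖ + 1 ≤ ‖x + (n : ℂ)‖ := by
    refine eventually_atTop.2 ⟨⌈‖x‖ + 2 * ‖z‖ + 1⌉₊, fun n hn => ?_⟩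
    have h1 : ‖x‖ + 2 * ‖z‖ + 1 ≤ (n : ℝ) :=
      le_trans (Nat.le_ceil _) (by exact_mod_cast hn)
    have h3 : ‖(n : ℂ)‖ ≤ ‖x + n‖ + ‖x‖ := by
      calc ‖(n : ℂ)‖ = ‖(x + n) - x‖ := by rw [add_sub_cancel_left]
      _ ≤ ‖x + n‖ + ‖x‖ := norm_sub_le _ _
    have h4 : ‖(n : ℂ)‖ = (n : ℝ) := by simp
    linarith
  filter_upwards [hev] with n hn
  have hxne : x + (n : ℂ) ≠ 0 := fun h => hx n (by linear_combination h)
  have hpne := poch_ne_zero hx n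
  have hfac : ((n.factorial : ℕ) : ℂ) ≠ 0 := by exact_mod_cast n.factorial_ne_zero
  have key : z ^ (n + 1) / (poch x (n + 1) * ((n + 1).factorial : ℂ))
      = (z ^ n / (poch x n * (n.factorial : ℂ))) * (z / ((x + n) * ((n : ℂ) + 1))) := by
    rw [poch_succ]
    have hn1 : ((n : ℂ) + 1) ≠ 0 := by
      exact_mod_cast Nat.cast_add_one_ne_zero (R := ℂ) n
    push_cast [Nat.factorial_succ]
    field_simp
    ring
  simp only [norm_norm]
  rw [key, norm_mul]
  have hD : 2 * ‖z‖ + 1 ≤ ‖(x + n) * ((n : ℂ) + 1)‖ := by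
    rw [norm_mul]
    have h1 : (1 : ℝ) ≤ ‖((n : ℂ) + 1)‖ := by
      have h := Complex.norm_natCast (n + 1)
      push_cast at h
      rw [h]
      have : (0:ℝ) ≤ (n:ℝ) := Nat.cast_nonneg n
      linarith
    nlinarith [norm_nonneg z, norm_nonneg (x + (n : ℂ))]
  have hpos : (0 : ℝ) < ‖(x + n) * ((n : ℂ) + 1)‖ := lt_of_lt_of_le (by positivity) hD
  have hw : ‖z / ((x + n) * ((n : ℂ) + 1))‖ ≤ 1 / 2 := by
    rw [norm_div, div_le_iff₀ hpos]
    nlinarith [norm_nonneg z]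
  calc ‖z ^ n / (poch x n * (n.factorial : ℂ))‖ * ‖z / ((x + n) * ((n : ℂ) + 1))‖
      ≤ ‖z ^ n / (poch x n * (n.factorial : ℂ))‖ * (1 / 2) :=
        mul_le_mul_of_nonneg_left hw (norm_nonneg _)
    _ = 1 / 2 * ‖z ^ n / (poch x n * (n.factorial : ℂ))‖ := by ring

lemma pFq_single (x z : ℂ) :
    pFq [] [x] z = ∑' n : ℕ, z ^ n / (poch x n * (n.factorial : ℂ)) := by
  unfold pFq
  refine tsum_congr fun n => ?_
  simp only [List.map_nil, List.prod_nil, List.map_cons, List.prod_cons, mul_one]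
  ring

theorem stmt0 (b c z : ℂ) (hb : notNonposInt b) (hc : notNonposInt c)
    (hbc : notNonposInt (b + c - 1)) :
    pFq [] [b] z * pFq [] [c] z =
      pFq [(b + c - 1) / 2, (b + c) / 2] [b, c, b + c - 1] (4 * z) := by
  rw [pFq_single b z, pFq_single c z,
    tsum_mul_tsum_eq_tsum_sum_antidiagonal_of_summable_norm (hyp_summable b z hb)
      (hyp_summable c z hc)]
  unfold pFq
  refine tsum_congr fun n => ?_
  simp only [List.map_cons, List.map_nil, List.prod_cons, List.prod_nil, mul_one]
  have hfac : ((n.factorial : ℕ) : ℂ) ≠ 0 := by exact_mod_cast n.factorial_ne_zero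
  have hPb := poch_ne_zero hb n
  have hPc := poch_ne_zero hc n
  have hPbc := poch_ne_zero hbc n
  have hsum : (∑ p ∈ Finset.HasAntidiagonal.antidiagonal n,
        z ^ p.1 / (poch b p.1 * (p.1.factorial : ℂ))
          * (z ^ p.2 / (poch c p.2 * (p.2.factorial : ℂ))))
      = T n b c * z ^ n / (poch b n * poch c n * (n.factorial : ℂ)) := by
    rw [T, Finset.sum_mul, Finset.sum_div]
    refine Finset.sum_congr rfl fun p hp => ?_
    have hp' := Finset.HasAntidiagonal.mem_antidiagonal.mp hp
    have hb1 : poch b n = poch b p.1 * poch (b + p.1) p.2 := by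
      rw [← hp']; exact poch_add b p.1 p.2
    have hc1 : poch c n = poch c p.2 * poch (c + p.2) p.1 := by
      rw [← hp', add_comm]; exact poch_add c p.2 p.1
    have hfeq : (n.factorial : ℂ)
        = (n.choose p.1 : ℂ) * (p.1.factorial : ℂ) * (p.2.factorial : ℂ) := by
      have h := Nat.choose_mul_factorial_mul_factorial (show p.1 ≤ n by omega)
      rw [show n - p.1 = p.2 by omega] at h
      exact_mod_cast h.symm
    have hz : z ^ n = z ^ p.1 * z ^ p.2 := by rw [← pow_add, hp']
    have h1 : poch b p.1 ≠ 0 := poch_ne_zero hb _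
    have h2 : poch c p.2 ≠ 0 := poch_ne_zero hc _
    have h3 : poch (b + p.1) p.2 ≠ 0 := poch_ne_zero (notNonposInt_add hb p.1) _
    have h4 : poch (c + p.2) p.1 ≠ 0 := poch_ne_zero (notNonposInt_add hc p.2) _
    have h5 : ((p.1.factorial : ℕ) : ℂ) ≠ 0 := by exact_mod_cast p.1.factorial_ne_zero
    have h6 : ((p.2.factorial : ℕ) : ℂ) ≠ 0 := by exact_mod_cast p.2.factorial_ne_zero
    have h7 : ((n.choose p.1 : ℕ) : ℂ) ≠ 0 :=
      Nat.cast_ne_zero.mpr (Nat.choose_pos (show p.1 ≤ n by omega)).ne'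
    rw [hb1, hc1, hfeq, hz]
    field_simp
  rw [hsum, T_eq n b c]
  have e1 : poch ((b + c - 1) / 2) n * poch ((b + c) / 2) n * (4 : ℂ) ^ n
      = poch (b + c - 1) n * poch (b + c + n - 1) n := by
    have h := poch_half (b + c - 1) n
    rw [show (b + c - 1 + 1) / 2 = (b + c) / 2 by ring] at h
    have h2 : poch (b + c - 1) (2 * n) = poch (b + c - 1) n * poch (b + c + n - 1) n := by
      rw [two_mul, poch_add, show b + c - 1 + (n : ℂ) = b + c + n - 1 by ring]
    rw [← h2, ← h]; ring
  have h4 : ((4 : ℂ)) ^ n ≠ 0 := by norm_num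
  rw [mul_pow]
  field_simp
  linear_combination (-(z ^ n)) * e1
end

section
/- Let p ≤ q, let a₁,…,a_p be complex, b₁,…,b_q complex with no bⱼ a nonpositive integer, let α, β be complex with Re(α) > 0, Re(β) > 0, and let a > 0, ω ∈ ℂ. Then ∫₀^a y^{α−1}(a−y)^{β−1} ₚF_q(a₁,…,a_p; b₁,…,b_q; −ωy) dy = Γ(α)Γ(β)a^{α+β−1}/Γ(α+β) · ₚ₊₁F_{q+1}(a₁,…,a_p, α; b₁,…,b_q, α+β; −aω). -/
open Complex MeasureTheory Filter Topology

lemma notNonposInt.add_nat_ne_zero {z : ℂ} (hz : notNonposInt z) (n : ℕ) : z + n ≠ 0 := by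
  intro h
  exact hz n (by linear_combination h)

lemma re_pos_notNonposInt {x : ℂ} (hx : 0 < x.re) : notNonposInt x := by
  intro m h
  rw [h] at hx
  simp at hx
  have : (0:ℝ) ≤ (m:ℝ) := Nat.cast_nonneg m
  linarith

lemma Gamma_add_nat {x : ℂ} (hx : notNonposInt x) (n : ℕ) :
    Complex.Gamma (x + n) = poch x n * Complex.Gamma x := by
  induction n with
  | zero => simp [poch_zero]
  | succ n ih =>
    have : x + (n + 1 : ℕ) = (x + n) + 1 := by push_cast; ring
    rw [this, Complex.Gamma_add_one _ (hx.add_nat_ne_zero n), ih, poch_succ]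
    ring

lemma prod_poch_succ (l : List ℂ) (n : ℕ) :
    (l.map (fun b => poch b (n+1))).prod
      = (l.map (fun b => poch b n)).prod * (l.map (fun b => b + (n:ℂ))).prod := by
  induction l with
  | nil => simp
  | cons b l ih => simp [ih, poch_succ]; ring

lemma norm_list_prod (l : List ℂ) : ‖l.prod‖ = (l.map (fun z => ‖z‖)).prod := by
  induction l with
  | nil => simp
  | cons b l ih => simp [ih]

lemma list_prod_le {l : List ℝ} {M : ℝ} (hM : 0 ≤ M) (h : ∀ z ∈ l, 0 ≤ z ∧ z ≤ M) :
    l.prod ≤ M ^ l.length := by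
  induction l with
  | nil => simp
  | cons b l ih =>
    simp only [List.prod_cons, List.length_cons, pow_succ]
    have hb := h b (by simp)
    have hl : l.prod ≤ M ^ l.length := ih (fun z hz => h z (by simp [hz]))
    have hlnn : 0 ≤ l.prod := List.prod_nonneg (fun z hz => (h z (by simp [hz])).1)
    calc b * l.prod ≤ M * M ^ l.length := by
          apply mul_le_mul hb.2 hl hlnn hM
      _ = M ^ l.length * M := by ring

lemma le_list_prod {l : List ℝ} {m : ℝ} (hm : 0 ≤ m) (h : ∀ z ∈ l, m ≤ z) :
    m ^ l.length ≤ l.prod := by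
  induction l with
  | nil => simp
  | cons b l ih =>
    simp only [List.prod_cons, List.length_cons, pow_succ]
    have hb := h b (by simp)
    have hl := ih (fun z hz => h z (by simp [hz]))
    calc m ^ l.length * m ≤ l.prod * b := by
          apply mul_le_mul hl hb hm (le_trans (pow_nonneg hm _) hl)
      _ = b * l.prod := by ring

lemma summable_coeff (as bs : List ℂ) (hpq : as.length ≤ bs.length)
    (hbs : ∀ bj ∈ bs, notNonposInt bj) {x : ℝ} (hx : 0 ≤ x) :
    Summable (fun n : ℕ => ‖(as.map (fun ai => poch ai n)).prod /
        (bs.map (fun bj => poch bj n)).prod‖ * x ^ n / (n.factorial : ℝ)) := by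
  set p := as.length
  set f : ℕ → ℝ := fun n => ‖(as.map (fun ai => poch ai n)).prod /
        (bs.map (fun bj => poch bj n)).prod‖ * x ^ n / (n.factorial : ℝ) with hf
  have hfnn : ∀ n, 0 ≤ f n := by
    intro n
    apply div_nonneg (mul_nonneg (norm_nonneg _) (pow_nonneg hx n)) (Nat.cast_nonneg _)
  -- bound quantity
  set K : ℝ := ((as ++ bs).map (fun z => ‖z‖)).foldr max 0 with hK
  have hgen : ∀ l : List ℝ, 0 ≤ l.foldr max 0 ∧ ∀ y ∈ l, y ≤ l.foldr max 0 := by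
    intro l
    induction l with
    | nil => simp
    | cons w l ih =>
      refine ⟨le_trans ih.1 (by simp), fun y hy => ?_⟩
      rcases List.mem_cons.mp hy with h | h
      · subst h; exact le_max_left _ _
      · exact le_trans (ih.2 y h) (le_max_right _ _)
  have hKmem : ∀ z ∈ as ++ bs, ‖z‖ ≤ K := by
    intro z hz
    exact (hgen _).2 ‖z‖ (List.mem_map.mpr ⟨z, hz, rfl⟩)
  have hK0 : 0 ≤ K := (hgen _).1
  apply summable_of_ratio_norm_eventually_le (r := 1/2) (by norm_num)
  rw [eventually_atTop]
  refine ⟨Nat.ceil (max (2*K + 2) (2 * 4^p * x)), fun n hn => ?_⟩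
  have hn' : max (2*K + 2) (2 * 4^p * x) ≤ (n : ℝ) := le_trans (Nat.le_ceil _) (by exact_mod_cast hn)
  have hnK : 2*K + 2 ≤ (n:ℝ) := le_trans (le_max_left _ _) hn'
  have hnx : 2 * 4^p * x ≤ (n:ℝ) := le_trans (le_max_right _ _) hn'
  have hn2 : (2:ℝ) ≤ n := by linarith
  have hn0 : (0:ℝ) < n := by linarith
  -- products
  set A := (as.map (fun b => b + (n:ℂ))).prod with hA
  set B := (bs.map (fun b => b + (n:ℂ))).prod with hB
  have hBne : B ≠ 0 := by
    rw [hB]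
    apply List.prod_ne_zero
    intro h0
    rw [List.mem_map] at h0
    obtain ⟨b, hb, hb0⟩ := h0
    exact (fun hmem => hbs b hb n (by linear_combination hb0)) hb
  have hPbne : (bs.map (fun bj => poch bj n)).prod ≠ 0 := by
    apply List.prod_ne_zero
    intro h0
    rw [List.mem_map] at h0
    obtain ⟨b, hb, hb0⟩ := h0
    exact poch_ne_zero (hbs b hb) n hb0
  have hAle : ‖A‖ ≤ (2*n) ^ p := by
    rw [hA, norm_list_prod]
    have := list_prod_le (l := (as.map (fun b => b + (n:ℂ))).map (fun z => ‖z‖))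
      (M := 2*n) (by linarith) ?_
    · simpa using this
    · intro z hz
      simp only [List.map_map, List.mem_map, Function.comp] at hz
      obtain ⟨ai, hai, rfl⟩ := hz
      refine ⟨norm_nonneg _, ?_⟩
      have h1 : ‖ai + (n:ℂ)‖ ≤ ‖ai‖ + ‖(n:ℂ)‖ := norm_add_le _ _
      have h2 : ‖ai‖ ≤ K := hKmem ai (by simp [hai])
      have h3 : ‖(n:ℂ)‖ = (n:ℝ) := by
        rw [show ((n:ℕ):ℂ) = ((n:ℝ):ℂ) by push_cast; ring, Complex.norm_real,
          Real.norm_of_nonneg hn0.le]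
      rw [h3] at h1
      linarith
  have hBge : ((n:ℝ)/2) ^ p ≤ ‖B‖ := by
    have h1 : ((n:ℝ)/2) ^ bs.length ≤ ‖B‖ := by
      rw [hB, norm_list_prod]
      have := le_list_prod (l := (bs.map (fun b => b + (n:ℂ))).map (fun z => ‖z‖))
        (m := n/2) (by linarith) ?_
      · simpa using this
      · intro z hz
        simp only [List.map_map, List.mem_map, Function.comp] at hz
        obtain ⟨bj, hbj, rfl⟩ := hz
        have h2 : ‖bj‖ ≤ K := hKmem bj (by simp [hbj])
        have h3 : ‖(n:ℂ)‖ - ‖bj‖ ≤ ‖bj + (n:ℂ)‖ := by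
          have h := norm_add_le (bj + (n:ℂ)) (-bj)
          rw [show bj + (n:ℂ) + -bj = (n:ℂ) by ring, norm_neg] at h
          linarith
        have h4 : ‖(n:ℂ)‖ = (n:ℝ) := by
          rw [show ((n:ℕ):ℂ) = ((n:ℝ):ℂ) by push_cast; ring, Complex.norm_real,
            Real.norm_of_nonneg hn0.le]
        rw [h4] at h3
        linarith
    refine le_trans ?_ h1
    apply pow_le_pow_right₀ (by linarith) hpq
  have hBpos : (0:ℝ) < ‖B‖ := norm_pos_iff.mpr hBne
  -- key recursion
  have hrec : f (n+1) = f n * (‖A‖ / ‖B‖ * (x / (n+1))) := by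
    rw [hf]
    simp only
    rw [prod_poch_succ, prod_poch_succ, ← hA, ← hB]
    rw [Nat.factorial_succ]
    have : (as.map fun ai => poch ai n).prod * A / ((bs.map fun bj => poch bj n).prod * B)
        = (as.map fun ai => poch ai n).prod / (bs.map fun bj => poch bj n).prod * (A / B) := by
      field_simp
    rw [this, norm_mul, norm_div]
    have hnfac : ((n+1) * n.factorial : ℕ) = ((n:ℝ)+1) * (n.factorial:ℝ) := by push_cast; ring
    rw [hnfac]
    have hfacpos : (0:ℝ) < (n.factorial:ℝ) := by exact_mod_cast n.factorial_pos
    field_simp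
    rw [norm_div]
    linear_combination (‖(as.map fun ai => poch ai n).prod‖ * ‖A‖ * x * x ^ n) * (inv_mul_cancel₀ hBpos.ne')
  have hratio : ‖A‖ / ‖B‖ * (x / (n+1)) ≤ 1/2 := by
    have h4 : ‖A‖ ≤ 4^p * ‖B‖ := by
      have e : ((2:ℝ)*n)^p = 4^p * ((n:ℝ)/2)^p := by
        rw [← mul_pow]; congr 1; ring
      have : ((4:ℝ))^p * ((n:ℝ)/2)^p ≤ 4^p * ‖B‖ := by
        apply mul_le_mul_of_nonneg_left hBge (by positivity)
      linarith [hAle, e ▸ hAle]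
    rw [div_mul_div_comm, div_le_iff₀ (by positivity)]
    have h5 : ‖A‖ * x ≤ 4^p * ‖B‖ * x :=
      mul_le_mul_of_nonneg_right h4 hx
    have h6 : ‖B‖ * (2 * 4^p * x) ≤ ‖B‖ * ((n:ℝ)+1) :=
      mul_le_mul_of_nonneg_left (by linarith) hBpos.le
    nlinarith
  rw [Real.norm_of_nonneg (hfnn _), Real.norm_of_nonneg (hfnn _), hrec]
  have := mul_le_mul_of_nonneg_left hratio (hfnn n)
  linarith


lemma beta_integrable {u v : ℂ} (hu : 0 < u.re) (hv : 0 < v.re) {a : ℝ} (ha : 0 < a) :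
    IntervalIntegrable (fun y : ℝ => (y:ℂ)^(u-1) * ((a:ℂ)-(y:ℂ))^(v-1)) volume 0 a := by
  have h0 := Complex.betaIntegral_convergent hu hv
  have h1 := h0.comp_mul_left (c := 1/a)
  rw [zero_div, one_div_one_div] at h1
  have h2 := h1.const_mul ((a:ℂ)^(u-1) * (a:ℂ)^(v-1))
  rw [intervalIntegrable_iff, Set.uIoc_of_le ha.le] at h2 ⊢
  apply h2.congr_fun ?_ measurableSet_Ioc
  intro y hy
  have hy0 : 0 < y := hy.1
  have hya : y ≤ a := hy.2
  have r1 : a * (y/a) = y := by field_simp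
  have r2 : a * (1 - y/a) = a - y := by field_simp
  have e1 : (y:ℂ) = (a:ℂ) * ((y/a : ℝ) : ℂ) := by
    rw [← ofReal_mul, r1]
  have e2 : (a:ℂ) - (y:ℂ) = (a:ℂ) * ((1 - y/a : ℝ) : ℂ) := by
    rw [← ofReal_mul, r2, ofReal_sub]
  have e3 : (1/a) * y = y / a := by ring
  simp only [e3]
  rw [e2, e1, mul_cpow_ofReal_nonneg ha.le (by positivity),
    mul_cpow_ofReal_nonneg ha.le (by rw [sub_nonneg, div_le_one ha]; exact hya)]
  have e4 : (1 : ℂ) - ((y/a : ℝ) : ℂ) = ((1 - y/a : ℝ) : ℂ) := by push_cast; ring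
  rw [e4]
  ring

theorem stmt2 (as bs : List ℂ) (hpq : as.length ≤ bs.length)
    (hbs : ∀ bj ∈ bs, notNonposInt bj) (α β : ℂ) (hα : 0 < α.re) (hβ : 0 < β.re)
    (a : ℝ) (ha : 0 < a) (ω : ℂ) :
    ∫ y in (0:ℝ)..a, (y : ℂ) ^ (α - 1) * ((a : ℂ) - (y : ℂ)) ^ (β - 1) *
        pFq as bs (-ω * (y : ℂ)) =
      Complex.Gamma α * Complex.Gamma β * (a : ℂ) ^ (α + β - 1) / Complex.Gamma (α + β) *
        pFq (as ++ [α]) (bs ++ [α + β]) (-(a : ℂ) * ω) := by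
  have ha' : (a:ℂ) ≠ 0 := ofReal_ne_zero.mpr ha.ne'
  set c : ℕ → ℂ := fun n => (as.map (fun ai => poch ai n)).prod /
    (bs.map (fun bj => poch bj n)).prod with hc
  set F : ℕ → ℝ → ℂ := fun n y =>
    ((y:ℂ)^(α-1) * ((a:ℂ)-(y:ℂ))^(β-1)) * (c n * (-ω * (y:ℂ))^n / (n.factorial : ℂ)) with hFdef
  set G : ℕ → ℝ → ℂ := fun n y => (y:ℂ)^((α+n)-1) * ((a:ℂ)-(y:ℂ))^(β-1) with hGdef
  set K : ℕ → ℂ := fun n => c n * (-ω)^n / (n.factorial : ℂ) with hKdef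
  have hαn : ∀ n : ℕ, 0 < (α + n).re := by
    intro n
    simp only [add_re, natCast_re]
    have : (0:ℝ) ≤ n := Nat.cast_nonneg n
    linarith
  have hFG : ∀ n : ℕ, ∀ y ∈ Set.Ioc (0:ℝ) a, F n y = K n * G n y := by
    intro n y hy
    have hy0 : ((y:ℝ):ℂ) ≠ 0 := ofReal_ne_zero.mpr hy.1.ne'
    simp only [hFdef, hGdef, hKdef]
    rw [show (α + n) - 1 = (α - 1) + (n:ℂ) by ring, cpow_add _ _ hy0, cpow_natCast,
      mul_pow]
    ring
  -- integrability of each F n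
  have hGint : ∀ n : ℕ, IntegrableOn (G n) (Set.Ioc 0 a) volume := by
    intro n
    have := beta_integrable (hαn n) hβ ha
    rwa [intervalIntegrable_iff, Set.uIoc_of_le ha.le] at this
  have hFint : ∀ n : ℕ, IntegrableOn (F n) (Set.Ioc 0 a) volume := by
    intro n
    exact MeasureTheory.IntegrableOn.congr_fun ((hGint n).const_mul (K n))
      (fun y hy => (hFG n y hy).symm) measurableSet_Ioc
  -- summability of integrals of norms
  have hB0 : IntegrableOn (fun y : ℝ => ‖(y:ℂ)^(α-1) * ((a:ℂ)-(y:ℂ))^(β-1)‖)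
      (Set.Ioc 0 a) volume := by
    have := beta_integrable hα hβ ha
    rw [intervalIntegrable_iff, Set.uIoc_of_le ha.le] at this
    exact this.norm
  set B : ℝ := ∫ y in Set.Ioc (0:ℝ) a, ‖(y:ℂ)^(α-1) * ((a:ℂ)-(y:ℂ))^(β-1)‖ with hBdef
  have hBnn : 0 ≤ B := integral_nonneg (fun y => norm_nonneg _)
  have hsum0 : Summable (fun n : ℕ => ‖c n‖ * (‖ω‖ * a) ^ n / (n.factorial : ℝ) * B) :=
    (summable_coeff as bs hpq hbs (by positivity)).mul_right B
  have hFnorm : ∀ n : ℕ,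
      (∫ y in Set.Ioc (0:ℝ) a, ‖F n y‖) ≤ ‖c n‖ * (‖ω‖ * a) ^ n / (n.factorial : ℝ) * B := by
    intro n
    have hmaj : ∀ y ∈ Set.Ioc (0:ℝ) a, ‖F n y‖ ≤
        ‖(y:ℂ)^(α-1) * ((a:ℂ)-(y:ℂ))^(β-1)‖ * (‖c n‖ * (‖ω‖ * a) ^ n / (n.factorial : ℝ)) := by
      intro y hy
      simp only [hFdef]
      rw [norm_mul]
      apply mul_le_mul_of_nonneg_left ?_ (norm_nonneg _)
      rw [norm_div, norm_mul, norm_pow, norm_mul, norm_neg]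
      have hnf : ‖((n.factorial : ℂ))‖ = (n.factorial : ℝ) := by
        rw [show ((n.factorial : ℕ):ℂ) = (((n.factorial : ℕ):ℝ):ℂ) by push_cast; ring,
          Complex.norm_real, Real.norm_of_nonneg (Nat.cast_nonneg _)]
      rw [hnf]
      have h1 : ‖ω‖ * ‖(y:ℂ)‖ ≤ ‖ω‖ * a := by
        apply mul_le_mul_of_nonneg_left ?_ (norm_nonneg ω)
        rw [Complex.norm_real, Real.norm_of_nonneg hy.1.le]
        exact hy.2
      have h2 : (‖ω‖ * ‖(y:ℂ)‖)^n ≤ (‖ω‖ * a)^n := by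
        apply pow_le_pow_left₀ (by positivity) h1
      have hfacpos : (0:ℝ) < (n.factorial : ℝ) := by exact_mod_cast n.factorial_pos
      gcongr
    have h3 := setIntegral_mono_on ((hFint n).norm) (hB0.mul_const _) measurableSet_Ioc hmaj
    rw [integral_mul_const] at h3
    exact h3.trans_eq (mul_comm _ _)
  have hsum : Summable (fun n : ℕ => ∫ y in Set.Ioc (0:ℝ) a, ‖F n y‖) :=
    Summable.of_nonneg_of_le (fun n => integral_nonneg (fun y => norm_nonneg _)) hFnorm hsum0
  -- step 1: rewrite LHS as set integral of tsum
  rw [intervalIntegral.integral_of_le ha.le]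
  have hpt : ∀ y : ℝ, (y:ℂ)^(α-1) * ((a:ℂ)-(y:ℂ))^(β-1) * pFq as bs (-ω*(y:ℂ))
      = ∑' n, F n y := by
    intro y
    rw [pFq, ← tsum_mul_left]
  have hstep1 : (∫ y in Set.Ioc (0:ℝ) a,
        (y:ℂ)^(α-1) * ((a:ℂ)-(y:ℂ))^(β-1) * pFq as bs (-ω*(y:ℂ)))
      = ∑' n : ℕ, ∫ y in Set.Ioc (0:ℝ) a, F n y := by
    rw [setIntegral_congr_fun measurableSet_Ioc (fun y _ => hpt y)]
    exact (integral_tsum_of_summable_integral_norm hFint hsum).symm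
  rw [hstep1]
  -- step 2: termwise evaluation
  rw [pFq, ← tsum_mul_left]
  apply tsum_congr
  intro n
  have hΓαβn : Complex.Gamma (α + (n:ℂ) + β) ≠ 0 := by
    apply Complex.Gamma_ne_zero
    apply re_pos_notNonposInt
    simp only [add_re, natCast_re]
    have : (0:ℝ) ≤ n := Nat.cast_nonneg n
    linarith
  have hΓα : Complex.Gamma α ≠ 0 := Complex.Gamma_ne_zero (re_pos_notNonposInt hα)
  have hΓβ : Complex.Gamma β ≠ 0 := Complex.Gamma_ne_zero (re_pos_notNonposInt hβ)
  have hαβre : 0 < (α + β).re := by simp only [add_re]; linarith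
  have hΓαβ : Complex.Gamma (α + β) ≠ 0 := Complex.Gamma_ne_zero (re_pos_notNonposInt hαβre)
  have hpαβ : poch (α + β) n ≠ 0 := poch_ne_zero (re_pos_notNonposInt hαβre) n
  have hPbne : (bs.map (fun bj => poch bj n)).prod ≠ 0 := by
    apply List.prod_ne_zero
    intro h0
    rw [List.mem_map] at h0
    obtain ⟨b, hb, hb0⟩ := h0
    exact poch_ne_zero (hbs b hb) n hb0
  have hfacne : ((n.factorial : ℕ) : ℂ) ≠ 0 := by
    exact_mod_cast Nat.cast_ne_zero.mpr n.factorial_ne_zero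
  -- integral evaluation
  have hIG : (∫ y in Set.Ioc (0:ℝ) a, F n y)
      = K n * ((a:ℂ) ^ ((α + n) + β - 1) * Complex.betaIntegral (α + n) β) := by
    rw [setIntegral_congr_fun measurableSet_Ioc (hFG n), integral_const_mul,
      ← intervalIntegral.integral_of_le ha.le]
    congr 1
    exact Complex.betaIntegral_scaled (α + n) β ha
  rw [hIG]
  have hbeta : Complex.betaIntegral (α + n) β
      = Complex.Gamma (α + n) * Complex.Gamma β / Complex.Gamma (α + (n:ℂ) + β) := by
    have := Complex.Gamma_mul_Gamma_eq_betaIntegral (hαn n) hβ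
    rw [eq_div_iff hΓαβn]
    linear_combination -this
  rw [hbeta]
  have hg1 : Complex.Gamma (α + n) = poch α n * Complex.Gamma α :=
    Gamma_add_nat (re_pos_notNonposInt hα) n
  have hg2 : Complex.Gamma (α + (n:ℂ) + β) = poch (α + β) n * Complex.Gamma (α + β) := by
    rw [show α + (n:ℂ) + β = (α + β) + (n:ℕ) by push_cast; ring]
    exact Gamma_add_nat (re_pos_notNonposInt hαβre) n
  have hprodα : ((as ++ [α]).map (fun ai => poch ai n)).prod
      = (as.map (fun ai => poch ai n)).prod * poch α n := by
    simp
  have hprodαβ : ((bs ++ [α + β]).map (fun bj => poch bj n)).prod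
      = (bs.map (fun bj => poch bj n)).prod * poch (α + β) n := by
    simp
  have hcpow : (a:ℂ) ^ ((α + n) + β - 1) = (a:ℂ) ^ (α + β - 1) * (a:ℂ) ^ n := by
    rw [show (α + n) + β - 1 = (α + β - 1) + (n:ℂ) by ring, cpow_add _ _ ha', cpow_natCast]
  have hωp : (-(a:ℂ) * ω) ^ n = (-ω) ^ n * (a:ℂ) ^ n := by
    rw [show -(a:ℂ) * ω = (-ω) * (a:ℂ) by ring, mul_pow]
  rw [hg1, hg2, hprodα, hprodαβ, hcpow, hωp, hKdef, hc]
  simp only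
  field_simp
end
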